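/- Let k be a field and G a finite abelian group. On the negative part of the Tate cochain complex, define m̂₂'((g₁,…,g_s), (h₁,…,h_t)) = ∑_{g∈G} (h₁,…,h_t, g^{-1}g_s^{-1}⋯g₁^{-1}, g₁,…,g_s) ∈ k[(G∖{1})^{s+t+1}] (with the convention that any tuple with an entry equal to 1 is zero). Then for α ∈ k[(G∖{1})^s], β ∈ k[(G∖{1})^t], γ ∈ k[(G∖{1})^u], associativity holds up to sign: m̂₂'(m̂₂'(α,β),γ) = ± m̂₂'(α, m̂₂'(β,γ)). -/

import Mathlib

/-- Normalization: a tuple containing the identity element of `G` as an entry is set to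
zero in `k[(G∖{1})^s]`. -/
noncomputable def tupleNrm (k : Type*) [Field k] {G : Type*} [Group G] [DecidableEq G]
    {s : ℕ} (t : Fin s → G) : (Fin s → G) →₀ k :=
  if ∃ i, t i = 1 then 0 else Finsupp.single t 1

/-- The product on the negative part of the Tate cochain complex of an abelian group:
`m̂₂'((g₁,…,g_s),(h₁,…,h_t)) = ∑_{g∈G} (h₁,…,h_t, g⁻¹g_s⁻¹⋯g₁⁻¹, g₁,…,g_s)`,
extended bilinearly, with any tuple containing `1` set to zero. -/
noncomputable def cupNeg (k : Type*) [Field k] (G : Type*) [CommGroup G] [Fintype G]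
    [DecidableEq G] (s t : ℕ) (α : (Fin s → G) →₀ k) (β : (Fin t → G) →₀ k) :
    (Fin (t + 1 + s) → G) →₀ k :=
  α.sum fun gs a => β.sum fun hs b =>
    (a * b) • ∑ g : G,
      tupleNrm k (Fin.append (Fin.append hs (fun _ : Fin 1 => g⁻¹ * (∏ i, gs i)⁻¹)) gs)

/-!
The sign is `+1`. Both sides are trilinear, so it suffices to compare them on basis tuples
`gs, hs, ks`. The normalisation of the inner product can be ignored, because a tuple with an
entry `1` reappears as a block of every tuple of an outer product. Both sides are then sums
over `(g, g')` of the concatenation `(ks, ·, hs, g⁻¹(∏ gs)⁻¹, gs)`: the inner tuple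
`(hs, g⁻¹(∏ gs)⁻¹, gs)` has product `(∏ hs) g⁻¹`, so the substitution `g' = g g₂` matches the
remaining entry `g'⁻¹ g (∏ hs)⁻¹` with `g₂⁻¹ (∏ hs)⁻¹`.
-/

section CupTuple

variable {G : Type*} [CommGroup G] {s t u : ℕ}

def cupTuple (gs : Fin s → G) (hs : Fin t → G) (g : G) : Fin (t + 1 + s) → G :=
  Fin.append (Fin.append hs fun _ : Fin 1 => g⁻¹ * (∏ i, gs i)⁻¹) gs

theorem prod_cupTuple (gs : Fin s → G) (hs : Fin t → G) (g : G) :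
    ∏ i, cupTuple gs hs g i = (∏ i, hs i) * g⁻¹ := by
  simp only [cupTuple, Fin.prod_univ_add, Fin.append_left, Fin.append_right, Fin.prod_univ_one]
  group

theorem exists_cupTuple_eq_one_of_left {gs : Fin s → G} (h : ∃ i, gs i = 1)
    (hs : Fin t → G) (g : G) : ∃ j, cupTuple gs hs g j = 1 :=
  let ⟨i, hi⟩ := h
  ⟨Fin.natAdd (t + 1) i, by rwa [cupTuple, Fin.append_right]⟩

theorem exists_cupTuple_eq_one_of_right (gs : Fin s → G) {hs : Fin t → G}
    (h : ∃ i, hs i = 1) (g : G) : ∃ j, cupTuple gs hs g j = 1 :=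
  let ⟨i, hi⟩ := h
  ⟨Fin.castAdd s (Fin.castAdd 1 i), by rwa [cupTuple, Fin.append_left, Fin.append_left]⟩

theorem cupTuple_cupTuple (gs : Fin s → G) (hs : Fin t → G) (ks : Fin u → G) (g g₂ : G)
    (h : u + 1 + t + 1 + s = u + 1 + (t + 1 + s)) :
    cupTuple (cupTuple gs hs g) ks (g * g₂) =
      cupTuple gs (cupTuple hs ks g₂) g ∘ Fin.cast h.symm := by
  have middle : (g * g₂)⁻¹ * (∏ i, cupTuple gs hs g i)⁻¹ = g₂⁻¹ * (∏ i, hs i)⁻¹ := by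
    rw [prod_cupTuple]
    group
  apply List.ofFn_injective
  rw [Function.comp_def, ← List.ofFn_congr h, cupTuple, middle]
  simp only [cupTuple, List.ofFn_fin_append, List.append_assoc]

end CupTuple

section TupleNrm

variable {k : Type*} [Field k] {G : Type*} [Group G] [DecidableEq G] {n m : ℕ}

theorem tupleNrm_of_exists_eq_one {T : Fin n → G} (h : ∃ i, T i = 1) : tupleNrm k T = 0 :=
  if_pos h

theorem equivMapDomain_tupleNrm (σ : Fin n ≃ Fin m) (T : Fin n → G) :
    Finsupp.equivMapDomain (σ.arrowCongr (Equiv.refl G)) (tupleNrm k T) =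
      tupleNrm k (T ∘ σ.symm) := by
  have hiff : (∃ i, T i = 1) ↔ ∃ j, (T ∘ σ.symm) j = 1 := σ.symm.surjective.exists
  unfold tupleNrm
  by_cases h : ∃ i, T i = 1
  · rw [if_pos h, if_pos (hiff.1 h), Finsupp.equivMapDomain_zero]
  · rw [if_neg h, if_neg (hiff.not.1 h), Finsupp.equivMapDomain_single]
    rfl

end TupleNrm

section CupNegBilin

variable (k : Type*) [Field k] (G : Type*) [CommGroup G] [Fintype G] [DecidableEq G]
  {s t u : ℕ}

noncomputable def cupNegBilin (s t : ℕ) :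
    ((Fin s → G) →₀ k) →ₗ[k] ((Fin t → G) →₀ k) →ₗ[k] (Fin (t + 1 + s) → G) →₀ k :=
  Finsupp.linearCombination k fun gs =>
    Finsupp.linearCombination k fun hs => ∑ g, tupleNrm k (cupTuple gs hs g)

variable {k G}

theorem cupNeg_eq_cupNegBilin (α : (Fin s → G) →₀ k) (β : (Fin t → G) →₀ k) :
    cupNeg k G s t α β = cupNegBilin k G s t α β := by
  simp only [cupNeg, cupNegBilin, Finsupp.linearCombination_apply, LinearMap.finsupp_sum_apply,
    LinearMap.smul_apply, Finsupp.smul_sum, mul_smul]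
  rfl

theorem cupNegBilin_single_single (gs : Fin s → G) (hs : Fin t → G) (a b : k) :
    cupNegBilin k G s t (Finsupp.single gs a) (Finsupp.single hs b) =
      (a * b) • ∑ g, tupleNrm k (cupTuple gs hs g) := by
  simp [cupNegBilin, mul_smul]

theorem cupNegBilin_single_of_exists_eq_one {gs : Fin s → G} (h : ∃ i, gs i = 1) (a : k) :
    cupNegBilin k G s t (Finsupp.single gs a) = 0 :=
  Finsupp.lhom_ext fun hs b => by
    simp [cupNegBilin_single_single,
      tupleNrm_of_exists_eq_one (exists_cupTuple_eq_one_of_left h _ _)]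

theorem cupNegBilin_apply_single_of_exists_eq_one (α : (Fin s → G) →₀ k) {hs : Fin t → G}
    (h : ∃ i, hs i = 1) (b : k) : cupNegBilin k G s t α (Finsupp.single hs b) = 0 := by
  suffices (cupNegBilin k G s t).flip (Finsupp.single hs b) = 0 from LinearMap.congr_fun this α
  exact Finsupp.lhom_ext fun gs a => by
    simp [cupNegBilin_single_single,
      tupleNrm_of_exists_eq_one (exists_cupTuple_eq_one_of_right _ h _)]

theorem cupNegBilin_tupleNrm_left (T : Fin s → G) :
    cupNegBilin k G s t (tupleNrm k T) = cupNegBilin k G s t (Finsupp.single T 1) := by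
  unfold tupleNrm
  split_ifs with h
  · rw [map_zero, cupNegBilin_single_of_exists_eq_one h]
  · rfl

theorem cupNegBilin_tupleNrm_right (α : (Fin s → G) →₀ k) (T : Fin t → G) :
    cupNegBilin k G s t α (tupleNrm k T) = cupNegBilin k G s t α (Finsupp.single T 1) := by
  unfold tupleNrm
  split_ifs with h
  · rw [map_zero, cupNegBilin_apply_single_of_exists_eq_one α h]
  · rfl

theorem cupNegBilin_assoc_single_one (gs : Fin s → G) (hs : Fin t → G) (ks : Fin u → G)
    (h : u + 1 + t + 1 + s = u + 1 + (t + 1 + s)) :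
    cupNegBilin k G (t + 1 + s) u
        (cupNegBilin k G s t (Finsupp.single gs 1) (Finsupp.single hs 1)) (Finsupp.single ks 1) =
      Finsupp.domCongr (Equiv.arrowCongr (finCongr h) (Equiv.refl G))
        (cupNegBilin k G s (u + 1 + t) (Finsupp.single gs 1)
          (cupNegBilin k G t u (Finsupp.single hs 1) (Finsupp.single ks 1))) := by
  simp only [cupNegBilin_single_single, one_mul, one_smul, map_sum, LinearMap.sum_apply,
    cupNegBilin_tupleNrm_left, cupNegBilin_tupleNrm_right, Finsupp.domCongr_apply,
    equivMapDomain_tupleNrm, finCongr_symm]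
  conv_rhs => rw [Finset.sum_comm]
  refine Fintype.sum_congr _ _ fun g => ?_
  rw [← Equiv.sum_comp (Equiv.mulLeft g)]
  refine Fintype.sum_congr _ _ fun g₂ => ?_
  rw [Equiv.coe_mulLeft, cupTuple_cupTuple _ _ _ _ _ h]
  rfl

theorem cupNegBilin_assoc (h : u + 1 + t + 1 + s = u + 1 + (t + 1 + s))
    (α : (Fin s → G) →₀ k) (β : (Fin t → G) →₀ k) (γ : (Fin u → G) →₀ k) :
    cupNegBilin k G (t + 1 + s) u (cupNegBilin k G s t α β) γ =
      Finsupp.equivMapDomain (Equiv.arrowCongr (finCongr h) (Equiv.refl G))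
        (cupNegBilin k G s (u + 1 + t) α (cupNegBilin k G t u β γ)) := by
  change _ = Finsupp.domLCongr (R := k) _ _
  induction α using Finsupp.induction_linear with
  | zero => simp
  | add α₁ α₂ h₁ h₂ => simp only [map_add, LinearMap.add_apply, h₁, h₂]
  | single gs a =>
    induction β using Finsupp.induction_linear with
    | zero => simp
    | add β₁ β₂ h₁ h₂ => simp only [map_add, LinearMap.add_apply, h₁, h₂]
    | single hs b =>
      induction γ using Finsupp.induction_linear with
      | zero => simp
      | add γ₁ γ₂ h₁ h₂ => simp only [map_add, h₁, h₂]
      | single ks c =>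
        rw [← Finsupp.smul_single_one gs a, ← Finsupp.smul_single_one hs b,
          ← Finsupp.smul_single_one ks c]
        simp only [map_smul, LinearMap.smul_apply, Finsupp.domLCongr_apply]
        rw [cupNegBilin_assoc_single_one]

end CupNegBilin

/-- For a finite abelian group `G`, the product `m̂₂'` on the negative
part of the Tate cochain complex is associative up to a sign depending only on the
degrees: `m̂₂'(m̂₂'(α,β),γ) = ± m̂₂'(α,m̂₂'(β,γ))` for `α ∈ k[(G∖{1})^s]`,
`β ∈ k[(G∖{1})^t]`, `γ ∈ k[(G∖{1})^u]`. -/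
theorem stmt19 (k : Type*) [Field k] (G : Type*) [CommGroup G] [Fintype G]
    [DecidableEq G] (s t u : ℕ) :
    ∃ ε : k, (ε = 1 ∨ ε = -1) ∧
      ∀ (α : (Fin s → G) →₀ k) (β : (Fin t → G) →₀ k) (γ : (Fin u → G) →₀ k),
        (∀ v ∈ α.support, ∀ i, v i ≠ 1) →
        (∀ v ∈ β.support, ∀ i, v i ≠ 1) →
        (∀ v ∈ γ.support, ∀ i, v i ≠ 1) →
        cupNeg k G (t + 1 + s) u (cupNeg k G s t α β) γ =
          ε • Finsupp.equivMapDomain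
            (Equiv.arrowCongr
              (finCongr (by omega : (u + 1 + t) + 1 + s = u + 1 + (t + 1 + s)))
              (Equiv.refl G))
            (cupNeg k G s (u + 1 + t) α (cupNeg k G t u β γ)) := by
  refine ⟨1, Or.inl rfl, fun α β γ _ _ _ => ?_⟩
  simp only [one_smul, cupNeg_eq_cupNegBilin]
  exact cupNegBilin_assoc _ α β γ
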